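/- arXiv:1807.09524 — 5 statements merged into one kernel-verified Lean document; each statement's English description precedes it below -/
import Mathlib

section
/- Let T be a rooted spanning tree of G and let u, v be two vertices of T such that neither is an ancestor of the other. Then the cut C = u↓ ∪ v↓ cuts exactly two edges of T, namely the parent edges of u and of v. -/
/-- Descendants of `v` (including `v` itself) in the rooted tree given by `parent`. -/
def desc {V : Type*} (parent : V → V) (v : V) : Set V :=
  {x | Relation.ReflTransGen (fun a b => parent a = b) x v}

/-- Ancestors of `v` (including `v` itself) in the rooted tree given by `parent`. -/
def anc {V : Type*} (parent : V → V) (v : V) : Set V :=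
  {x | Relation.ReflTransGen (fun a b => parent a = b) v x}

/-- The (undirected) edges of the rooted tree determined by `parent`. -/
def treeAdj {V : Type*} (parent : V → V) : SimpleGraph V :=
  SimpleGraph.fromRel (fun a b => parent a = b)

lemma rtg_iff_iter {V : Type*} (parent : V → V) (x y : V) :
    Relation.ReflTransGen (fun a b => parent a = b) x y ↔ ∃ n, parent^[n] x = y := by
  constructor
  · intro h
    induction h with
    | refl => exact ⟨0, rfl⟩
    | tail _ hbc ih =>
      obtain ⟨n, hn⟩ := ih
      exact ⟨n + 1, by rw [Function.iterate_succ_apply', hn, hbc]⟩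
  · rintro ⟨n, rfl⟩
    induction n with
    | zero => exact Relation.ReflTransGen.refl
    | succ n ih =>
      rw [Function.iterate_succ_apply']
      exact ih.tail rfl

lemma iter_root {V : Type*} (parent : V → V) (r : V) (hroot : parent r = r) (n : ℕ) :
    parent^[n] r = r := by
  induction n with
  | zero => rfl
  | succ n ih => rw [Function.iterate_succ_apply', ih, hroot]

lemma no_cycle {V : Type*} (parent : V → V) (r : V) (hroot : parent r = r)
    (hreach : ∀ x, Relation.ReflTransGen (fun a b => parent a = b) x r)
    (u : V) (hu : u ≠ r) :
    ¬ Relation.ReflTransGen (fun a b => parent a = b) (parent u) u := by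
  intro h
  obtain ⟨m, hm⟩ := (rtg_iff_iter parent _ _).1 h
  have hcyc : parent^[m + 1] u = u := by
    rw [Function.iterate_succ_apply]; exact hm
  obtain ⟨n, hn⟩ := (rtg_iff_iter parent u r).1 (hreach u)
  have hk : ∀ k, parent^[k * (m + 1)] u = u := by
    intro k
    induction k with
    | zero => simp
    | succ k ih =>
      rw [Nat.succ_mul, Function.iterate_add_apply, hcyc, ih]
  have : parent^[n * m + n] u = u := by
    have := hk n
    rwa [Nat.mul_succ] at this
  rw [Function.iterate_add_apply, hn, iter_root parent r hroot] at this
  exact hu this.symm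

/-- If `u` and `v` are non-root vertices of a rooted spanning tree, neither an ancestor
of the other, then the cut `u↓ ∪ v↓` cuts exactly two edges of the tree, namely the
parent edges of `u` and of `v`. -/
theorem cut_union_descendants_two_edges {V : Type*} [Fintype V]
    (parent : V → V) (r : V) (hroot : parent r = r)
    (hreach : ∀ x, Relation.ReflTransGen (fun a b => parent a = b) x r)
    (u v : V) (hu : u ≠ r) (hv : v ≠ r)
    (huv : u ∉ anc parent v) (hvu : v ∉ anc parent u) :
    ({p : V × V | (treeAdj parent).Adj p.1 p.2 ∧
        p.1 ∈ desc parent u ∪ desc parent v ∧ p.2 ∉ desc parent u ∪ desc parent v}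
      = {(u, parent u), (v, parent v)})
    ∧ Nat.card {p : V × V // (treeAdj parent).Adj p.1 p.2 ∧
        p.1 ∈ desc parent u ∪ desc parent v ∧ p.2 ∉ desc parent u ∪ desc parent v} = 2 := by
  have hne_uv : u ≠ v := by
    rintro rfl
    exact huv Relation.ReflTransGen.refl
  -- parent u not a descendant of u
  have hpu_u : parent u ∉ desc parent u :=
    no_cycle parent r hroot hreach u hu
  have hpv_v : parent v ∉ desc parent v :=
    no_cycle parent r hroot hreach v hv
  -- u not a descendant of v, v not a descendant of u
  have hu_dv : u ∉ desc parent v := hvu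
  have hv_du : v ∉ desc parent u := huv
  have hpu_v : parent u ∉ desc parent v := by
    intro h
    exact hu_dv (Relation.ReflTransGen.head rfl h)
  have hpv_u : parent v ∉ desc parent u := by
    intro h
    exact hv_du (Relation.ReflTransGen.head rfl h)
  have hu_du : u ∈ desc parent u := Relation.ReflTransGen.refl
  have hv_dv : v ∈ desc parent v := Relation.ReflTransGen.refl
  have hupu : u ≠ parent u := fun h => hpu_u (h ▸ hu_du)
  have hvpv : v ≠ parent v := fun h => hpv_v (h ▸ hv_dv)
  have hset : {p : V × V | (treeAdj parent).Adj p.1 p.2 ∧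
        p.1 ∈ desc parent u ∪ desc parent v ∧ p.2 ∉ desc parent u ∪ desc parent v}
      = {(u, parent u), (v, parent v)} := by
    ext ⟨a, b⟩
    simp only [Set.mem_setOf_eq, Set.mem_insert_iff, Set.mem_singleton_iff, Prod.mk.injEq]
    constructor
    · rintro ⟨hadj, ha, hb⟩
      rw [treeAdj, SimpleGraph.fromRel_adj] at hadj
      obtain ⟨hab, hor⟩ := hadj
      have hstep : parent a = b := by
        rcases hor with h | h
        · exact h
        · exfalso
          rcases ha with ha | ha
          · exact hb (Or.inl (Relation.ReflTransGen.head h ha))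
          · exact hb (Or.inr (Relation.ReflTransGen.head h ha))
      rcases ha with ha | ha
      · left
        have hau : a = u := by
          rcases Relation.ReflTransGen.cases_head ha with h | ⟨c, hc, hcu⟩
          · exact h
          · exact absurd (Or.inl ((hc.symm.trans hstep) ▸ hcu)) hb
        exact ⟨hau, by rw [← hstep, hau]⟩
      · right
        have hav : a = v := by
          rcases Relation.ReflTransGen.cases_head ha with h | ⟨c, hc, hcv⟩
          · exact h
          · exact absurd (Or.inr ((hc.symm.trans hstep) ▸ hcv)) hb
        exact ⟨hav, by rw [← hstep, hav]⟩
    · rintro (⟨rfl, rfl⟩ | ⟨rfl, rfl⟩)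
      · refine ⟨?_, Or.inl hu_du, ?_⟩
        · rw [treeAdj, SimpleGraph.fromRel_adj]
          exact ⟨hupu, Or.inl rfl⟩
        · rintro (h | h)
          · exact hpu_u h
          · exact hpu_v h
      · refine ⟨?_, Or.inr hv_dv, ?_⟩
        · rw [treeAdj, SimpleGraph.fromRel_adj]
          exact ⟨hvpv, Or.inl rfl⟩
        · rintro (h | h)
          · exact hpv_u h
          · exact hpv_v h
  refine ⟨hset, ?_⟩
  have hnepair : (u, parent u) ≠ (v, parent v) := by
    intro h
    exact hne_uv (congrArg Prod.fst h)
  have h2 : Nat.card {p : V × V // p ∈ ({(u, parent u), (v, parent v)} : Set (V × V))} = 2 := by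
    rw [Nat.card_coe_set_eq]
    exact Set.ncard_pair hnepair
  rw [← hset] at h2
  exact h2
end

section
/- Let T be a rooted spanning tree of G, and let t, v be vertices with v a proper descendant of t. Then the cut C = t↓ \ v↓ cuts exactly two edges of T, namely the parent edges of t and of v. -/
private lemma step_iter {V : Type*} (parent : V → V) {x y : V}
    (h : Relation.ReflTransGen (fun a b => parent a = b) x y) :
    ∃ n, parent^[n] x = y := by
  induction h with
  | refl => exact ⟨0, rfl⟩
  | tail _ h ih =>
      obtain ⟨n, hn⟩ := ih
      exact ⟨n + 1, by rw [Function.iterate_succ_apply', hn, h]⟩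

private lemma fixed_reach {V : Type*} (parent : V → V) {x y : V} (hx : parent x = x)
    (h : Relation.ReflTransGen (fun a b => parent a = b) x y) : y = x := by
  induction h with
  | refl => rfl
  | tail _ h ih => rw [← h, ih, hx]

private lemma rtg_antisymm {V : Type*} (parent : V → V) (r : V) (hroot : parent r = r)
    (hreach : ∀ x, Relation.ReflTransGen (fun a b => parent a = b) x r)
    {x y : V} (hxy : Relation.ReflTransGen (fun a b => parent a = b) x y)
    (hyx : Relation.ReflTransGen (fun a b => parent a = b) y x) : x = y := by
  obtain ⟨m, hm⟩ := step_iter parent hxy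
  obtain ⟨n, hn⟩ := step_iter parent hyx
  obtain ⟨k, hk⟩ := step_iter parent (hreach x)
  by_contra hne
  have hm0 : m ≠ 0 := by rintro rfl; exact hne hm
  have hp : parent^[n + m] x = x := by rw [Function.iterate_add_apply, hm, hn]
  have hcyc : parent^[(n + m) * k] x = x := by
    rw [Function.iterate_mul]; exact Function.iterate_fixed hp k
  have hge : k ≤ (n + m) * k := Nat.le_mul_of_pos_left k (by omega)
  have hxr : x = r := by
    have h2 := hcyc
    rw [← Nat.sub_add_cancel hge, Function.iterate_add_apply, hk,
        Function.iterate_fixed hroot] at h2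
    exact h2.symm
  have hy : y = r := by rw [← hm, hxr, Function.iterate_fixed hroot]
  exact hne (hxr.trans hy.symm)

private lemma desc_head {V : Type*} (parent : V → V) {x w : V} :
    x ∈ desc parent w ↔ x = w ∨ parent x ∈ desc parent w := by
  constructor
  · intro h
    rcases h.cases_head with h | ⟨c, hc, h⟩
    · exact Or.inl h
    · exact Or.inr (hc ▸ h)
  · rintro (rfl | h)
    · exact Relation.ReflTransGen.refl
    · exact Relation.ReflTransGen.head rfl h

/-- If `t` is a non-root vertex and `v` a proper descendant of `t` in a rooted spanning
tree, then the cut `t↓ \ v↓` cuts exactly two edges of the tree, namely the parent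
edges of `t` and of `v`. -/
theorem cut_diff_descendants_two_edges {V : Type*} [Fintype V]
    (parent : V → V) (r : V) (hroot : parent r = r)
    (hreach : ∀ x, Relation.ReflTransGen (fun a b => parent a = b) x r)
    (t v : V) (ht : t ≠ r) (hv : v ∈ desc parent t) (hvt : v ≠ t) :
    ({p : V × V | (treeAdj parent).Adj p.1 p.2 ∧
        p.1 ∈ desc parent t \ desc parent v ∧ p.2 ∉ desc parent t \ desc parent v}
      = {(t, parent t), (parent v, v)})
    ∧ Nat.card {p : V × V // (treeAdj parent).Adj p.1 p.2 ∧
        p.1 ∈ desc parent t \ desc parent v ∧ p.2 ∉ desc parent t \ desc parent v} = 2 := by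
  classical
  have anti : ∀ {x y : V}, x ∈ desc parent y → y ∈ desc parent x → x = y :=
    fun hxy hyx => rtg_antisymm parent r hroot hreach hxy hyx
  have self_mem : ∀ x : V, x ∈ desc parent x := fun _ => Relation.ReflTransGen.refl
  have mem_parent : ∀ x : V, x ∈ desc parent (parent x) :=
    fun _ => Relation.ReflTransGen.single rfl
  have hpt_ne : parent t ≠ t := fun h => ht (fixed_reach parent h (hreach t)).symm
  have hpv_ne : parent v ≠ v := fun h => hvt (fixed_reach parent h hv).symm
  have htnv : t ∉ desc parent v := fun h => hvt (anti hv h)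
  have hpt_nt : parent t ∉ desc parent t := fun h => hpt_ne (anti h (mem_parent t))
  have hpv_nv : parent v ∉ desc parent v := fun h => hpv_ne (anti h (mem_parent v))
  have hpv_t : parent v ∈ desc parent t := by
    rcases (desc_head parent).1 hv with h | h
    · exact absurd h hvt
    · exact h
  have hset : {p : V × V | (treeAdj parent).Adj p.1 p.2 ∧
        p.1 ∈ desc parent t \ desc parent v ∧ p.2 ∉ desc parent t \ desc parent v}
      = {(t, parent t), (parent v, v)} := by
    ext ⟨a, b⟩
    simp only [Set.mem_setOf_eq, treeAdj, SimpleGraph.fromRel_adj, Set.mem_diff,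
      Set.mem_insert_iff, Set.mem_singleton_iff, Prod.mk.injEq]
    constructor
    · rintro ⟨⟨hab, hrel⟩, ⟨hat, hav⟩, hbC⟩
      rcases hrel with hpa | hpb
      · -- parent a = b
        rcases (desc_head parent).1 hat with heq | hbt
        · exact Or.inl ⟨heq, (heq ▸ hpa).symm⟩
        · rw [hpa] at hbt
          exfalso
          have hbv : b ∈ desc parent v := by
            by_contra hbv
            exact hbC ⟨hbt, hbv⟩
          exact hav ((desc_head parent).2 (Or.inr (hpa ▸ hbv)))
      · -- parent b = a
        have hbt : b ∈ desc parent t := (desc_head parent).2 (Or.inr (hpb ▸ hat))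
        have hbv : b ∈ desc parent v := by
          by_contra hbv
          exact hbC ⟨hbt, hbv⟩
        rcases (desc_head parent).1 hbv with heq | h
        · exact Or.inr ⟨(heq ▸ hpb).symm, heq⟩
        · exact absurd (hpb ▸ h) hav
    · rintro (⟨h1, h2⟩ | ⟨h1, h2⟩) <;> rw [h1, h2]
      · exact ⟨⟨fun h => hpt_ne h.symm, Or.inl rfl⟩, ⟨self_mem t, htnv⟩,
          fun h => hpt_nt h.1⟩
      · exact ⟨⟨hpv_ne, Or.inr rfl⟩, ⟨hpv_t, hpv_nv⟩,
          fun h => h.2 (self_mem v)⟩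
  refine ⟨hset, ?_⟩
  have hne : ((t, parent t) : V × V) ≠ (parent v, v) := by
    intro h
    rw [Prod.mk.injEq] at h
    exact hvt (anti ((desc_head parent).2 (Or.inr (h.2 ▸ self_mem v)))
      ((desc_head parent).2 (Or.inr (h.1 ▸ self_mem t)))).symm
  calc Nat.card {p : V × V // (treeAdj parent).Adj p.1 p.2 ∧
        p.1 ∈ desc parent t \ desc parent v ∧ p.2 ∉ desc parent t \ desc parent v}
      = Nat.card ↥({(t, parent t), (parent v, v)} : Set (V × V)) :=
        Nat.card_congr (Equiv.setCongr hset)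
    _ = 2 := by rw [Nat.card_coe_set_eq, Set.ncard_pair hne]
end

section
/- Define the bough decomposition procedure on a rooted tree T: repeatedly remove all boughs (maximal paths from a leaf upward ending at the first vertex that has a sibling, or at the root if T is a path). Then after each iteration, the number of leaves of the remaining tree is at most half the number of leaves before the iteration. -/
/-- The children of a vertex `x` in the rooted tree given by `parent`. -/
def children {V : Type*} (parent : V → V) (x : V) : Set V :=
  {c | c ≠ x ∧ parent c = x}

/-- `v` lies on a bough: the subtree rooted at `v` is a path, i.e. every descendant of
`v` has at most one child. Such vertices are exactly those removed when all boughs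
(maximal leaf-to-first-branching paths) are removed. -/
def inBough {V : Type*} (parent : V → V) (v : V) : Prop :=
  ∀ x ∈ desc parent v, (children parent x).Subsingleton

/-- `x` is a leaf: it has no children. -/
def isLeaf {V : Type*} (parent : V → V) (x : V) : Prop :=
  children parent x = ∅

/-!
A new leaf `v` (a vertex off the boughs all of whose children lie on boughs) has a branching
descendant, and the subtrees of two of its children contain two distinct leaves below `v`.
Conversely a leaf lies below at most one new leaf: of two of them, the lower one would sit in the
subtree of a child of the upper one, which is a path. Double counting the pairs
(new leaf, leaf below it) gives the bound.
-/

section Descendants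

variable {V : Type*} {parent : V → V} {x v w : V}

theorem exists_iterate_eq_of_mem_desc (h : x ∈ desc parent v) : ∃ n, parent^[n] x = v := by
  induction h with
  | refl => exact ⟨0, rfl⟩
  | tail _ step ih =>
    obtain ⟨n, hn⟩ := ih
    exact ⟨n + 1, by rw [Function.iterate_succ_apply', hn, step]⟩

theorem mem_desc_self : v ∈ desc parent v := Relation.ReflTransGen.refl

theorem desc_trans (hx : x ∈ desc parent v) (hv : v ∈ desc parent w) : x ∈ desc parent w :=
  hx.trans hv

theorem mem_desc_of_mem_children (hx : x ∈ children parent v) : x ∈ desc parent v :=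
  Relation.ReflTransGen.single hx.2

theorem mem_desc_total (hv : x ∈ desc parent v) (hw : x ∈ desc parent w) :
    v ∈ desc parent w ∨ w ∈ desc parent v :=
  Relation.ReflTransGen.total_of_right_unique (fun _ _ _ hb hc => hb.symm.trans hc) hv hw

theorem parent_mem_desc (hx : x ∈ desc parent v) (hne : x ≠ v) : parent x ∈ desc parent v := by
  obtain ⟨_, rfl, h⟩ := (Relation.ReflTransGen.cases_head hx).resolve_left hne
  exact h

theorem exists_mem_children_of_mem_desc (hx : x ∈ desc parent w) (hne : x ≠ w) :
    ∃ c ∈ children parent w, x ∈ desc parent c := by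
  induction hx with
  | refl => exact absurd rfl hne
  | @tail b c h step ih =>
    by_cases hbc : b = c
    · subst hbc
      exact ih hne
    · exact ⟨b, ⟨hbc, step⟩, h⟩

theorem inBough.of_mem_desc (hv : inBough parent v) (hx : x ∈ desc parent v) :
    inBough parent x :=
  fun y hy => hv y (desc_trans hy hx)

theorem eq_of_mem_desc_of_forall_children_inBough (hv : ¬ inBough parent v)
    (hw : ∀ c ∈ children parent w, inBough parent c) (h : v ∈ desc parent w) : v = w := by
  by_contra hne
  obtain ⟨c, hc, hvc⟩ := exists_mem_children_of_mem_desc h hne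
  exact hv ((hw c hc).of_mem_desc hvc)

end Descendants

section Rooted

variable {V : Type*} {parent : V → V} {r : V}

/-- The orbit of `x` is periodic and contains the fixed point `r`. -/
theorem eq_root_of_iterate_succ_eq_self (hroot : parent r = r)
    (hreach : ∀ x, Relation.ReflTransGen (fun a b => parent a = b) x r) {x : V} {n : ℕ}
    (hx : parent^[n + 1] x = x) : x = r := by
  obtain ⟨m, hm⟩ := exists_iterate_eq_of_mem_desc (hreach x)
  have hperiodic : Function.IsPeriodicPt parent ((n + 1) * m) x :=
    Function.IsPeriodicPt.mul_const hx m
  calc x = parent^[(n + 1) * m] x := hperiodic.eq.symm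
    _ = parent^[(n + 1) * m - m] (parent^[m] x) := by
      rw [← Function.iterate_add_apply, Nat.sub_add_cancel (Nat.le_mul_of_pos_left m n.succ_pos)]
    _ = r := by rw [hm, Function.iterate_fixed hroot]

theorem notMem_desc_of_mem_children (hroot : parent r = r)
    (hreach : ∀ x, Relation.ReflTransGen (fun a b => parent a = b) x r) {c x : V}
    (hc : c ∈ children parent x) : x ∉ desc parent c := by
  intro hx
  obtain ⟨n, hn⟩ := exists_iterate_eq_of_mem_desc hx
  have hcr : c = r :=
    eq_root_of_iterate_succ_eq_self hroot hreach (n := n) (by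
      rw [Function.iterate_succ_apply, hc.2, hn])
  exact hc.1 (by rw [← hc.2, hcr, hroot])

theorem exists_isLeaf_mem_desc [Finite V] (hroot : parent r = r)
    (hreach : ∀ x, Relation.ReflTransGen (fun a b => parent a = b) x r) (v : V) :
    ∃ l ∈ desc parent v, isLeaf parent l := by
  obtain ⟨l, hl, hmin⟩ := Set.exists_min_image (desc parent v) (fun x => (desc parent x).ncard)
    (Set.toFinite _) ⟨v, mem_desc_self⟩
  refine ⟨l, hl, Set.eq_empty_of_forall_notMem fun c hc => ?_⟩
  have hsub : desc parent c ⊂ desc parent l :=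
    ⟨fun _ hx => desc_trans hx (mem_desc_of_mem_children hc),
      fun h => notMem_desc_of_mem_children hroot hreach hc (h mem_desc_self)⟩
  exact (Set.ncard_lt_ncard hsub).not_ge (hmin c (desc_trans (mem_desc_of_mem_children hc) hl))

theorem disjoint_desc_of_mem_children (hroot : parent r = r)
    (hreach : ∀ x, Relation.ReflTransGen (fun a b => parent a = b) x r) {x c₁ c₂ : V}
    (hc₁ : c₁ ∈ children parent x) (hc₂ : c₂ ∈ children parent x) (hne : c₁ ≠ c₂) :
    Disjoint (desc parent c₁) (desc parent c₂) := by
  have notMem : ∀ {a b}, a ∈ children parent x → b ∈ children parent x → a ≠ b →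
      a ∉ desc parent b := fun ha hb hab h =>
    notMem_desc_of_mem_children hroot hreach hb (ha.2 ▸ parent_mem_desc h hab)
  refine Set.disjoint_left.2 fun y hy₁ hy₂ => ?_
  rcases mem_desc_total hy₁ hy₂ with h | h
  exacts [notMem hc₁ hc₂ hne h, notMem hc₂ hc₁ hne.symm h]

theorem exists_two_isLeaf_mem_desc_of_not_inBough [Finite V] (hroot : parent r = r)
    (hreach : ∀ x, Relation.ReflTransGen (fun a b => parent a = b) x r) {v : V}
    (hv : ¬ inBough parent v) :
    ∃ l₁ ∈ desc parent v, ∃ l₂ ∈ desc parent v,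
      isLeaf parent l₁ ∧ isLeaf parent l₂ ∧ l₁ ≠ l₂ := by
  obtain ⟨x, hx, hbranch⟩ : ∃ x ∈ desc parent v, ¬ (children parent x).Subsingleton := by
    simpa [inBough] using hv
  obtain ⟨c₁, hc₁, c₂, hc₂, hne⟩ := Set.not_subsingleton_iff.1 hbranch
  obtain ⟨l₁, hl₁, hleaf₁⟩ := exists_isLeaf_mem_desc hroot hreach c₁
  obtain ⟨l₂, hl₂, hleaf₂⟩ := exists_isLeaf_mem_desc hroot hreach c₂
  refine ⟨l₁, desc_trans (desc_trans hl₁ (mem_desc_of_mem_children hc₁)) hx,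
    l₂, desc_trans (desc_trans hl₂ (mem_desc_of_mem_children hc₂)) hx, hleaf₁, hleaf₂, ?_⟩
  rintro rfl
  exact Set.disjoint_left.1 (disjoint_desc_of_mem_children hroot hreach hc₁ hc₂ hne) hl₁ hl₂

end Rooted

/-- Removing all boughs of a rooted tree at least halves the number of leaves:
the leaves of the remaining tree (surviving vertices all of whose children were
removed) number at most half the leaves of the original tree. -/
theorem bough_removal_halves_leaves {V : Type*} [Fintype V]
    (parent : V → V) (r : V) (hroot : parent r = r)
    (hreach : ∀ x, Relation.ReflTransGen (fun a b => parent a = b) x r) :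
    2 * Set.ncard {v | ¬ inBough parent v ∧ ∀ c ∈ children parent v, inBough parent c}
      ≤ Set.ncard {v | isLeaf parent v} := by
  classical
  set S := {v | ¬ inBough parent v ∧ ∀ c ∈ children parent v, inBough parent c}
  set L := {v | isLeaf parent v}
  have hcount := Finset.card_mul_le_card_mul (fun v l => l ∈ desc parent v)
    (s := S.toFinset) (t := L.toFinset) (m := 2) (n := 1) ?_ ?_
  · simpa [Set.ncard_eq_toFinset_card', mul_comm] using hcount
  · intro v hv
    obtain ⟨l₁, hl₁, l₂, hl₂, hleaf₁, hleaf₂, hne⟩ :=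
      exists_two_isLeaf_mem_desc_of_not_inBough hroot hreach (Set.mem_toFinset.1 hv).1
    exact Finset.one_lt_card.2 ⟨l₁, by simp [L, hl₁, hleaf₁], l₂, by simp [L, hl₂, hleaf₂], hne⟩
  · intro l _
    refine Finset.card_le_one.2 fun v hv w hw => ?_
    simp only [Finset.mem_bipartiteBelow, Set.mem_toFinset, S, Set.mem_ofPred_eq] at hv hw
    rcases mem_desc_total hv.2 hw.2 with h | h
    exacts [eq_of_mem_desc_of_forall_children_inBough hv.1.1 hw.1.2 h,
      (eq_of_mem_desc_of_forall_children_inBough hw.1.1 hv.1.2 h).symm]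
end

section
/- The bough decomposition of a rooted tree with n vertices terminates after at most log₂(n) iterations, and consequently decomposes the tree into vertex-disjoint paths such that every root-to-leaf path of T intersects at most log₂(n) of these paths. -/
/-- The children of `x` that survive in the vertex set `S`. -/
def childrenIn {V : Type*} (parent : V → V) (S : Set V) (x : V) : Set V :=
  {c | c ∈ S ∧ c ≠ x ∧ parent c = x}

/-- `v` lies on a bough of the tree restricted to the surviving vertex set `S`:
every surviving descendant of `v` has at most one surviving child. -/
def inBoughIn {V : Type*} (parent : V → V) (S : Set V) (v : V) : Prop :=
  ∀ x ∈ desc parent v, x ∈ S → (childrenIn parent S x).Subsingleton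

/-- The vertices surviving after `k` iterations of the bough decomposition
(each iteration removes all vertices lying on some bough of the current tree). -/
def surv {V : Type*} (parent : V → V) : ℕ → Set V
  | 0 => Set.univ
  | k + 1 => {v | v ∈ surv parent k ∧ ¬ inBoughIn parent (surv parent k) v}

/-!
A leaf of the tree left after iteration `k + 1` was not on a bough of the previous tree, so it
had two surviving children and, below them, two distinct previous leaves. Leaves of one stage
are pairwise incomparable in the ancestor order, so each previous leaf lies below at most one
new leaf, and double counting shows that the number of leaves at least halves. The tree has
fewer than `n` leaves and every nonempty stage has a leaf, so nothing survives `⌈log₂ n⌉`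
iterations.
-/

def leavesIn {V : Type*} (parent : V → V) (S : Set V) : Set V :=
  {x ∈ S | childrenIn parent S x = ∅}

section RootedTree

variable {V : Type*} {parent : V → V} {r : V}

local notation:50 x " ≼ " y => Relation.ReflTransGen (fun a b => parent a = b) x y

theorem eq_of_fixed_reaches (hroot : parent r = r) {a : V} (h : r ≼ a) : a = r := by
  induction h with
  | refl => rfl
  | tail _ hbc ih => rw [← hbc, ih, hroot]

theorem parent_reaches_of_reaches_of_ne {a b : V} (h : a ≼ b) (hne : a ≠ b) :
    parent a ≼ b := by
  obtain ⟨_, rfl, hc⟩ := (Relation.ReflTransGen.cases_head_iff.1 h).resolve_left hne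
  exact hc

theorem reaches_total {x a b : V} (ha : x ≼ a) (hb : x ≼ b) : (a ≼ b) ∨ (b ≼ a) :=
  ha.total_of_right_unique (fun _ _ _ h₁ h₂ => h₁.symm.trans h₂) hb

theorem reaches_antisymm (hroot : parent r = r) (hreach : ∀ x, x ≼ r) {a b : V}
    (hab : a ≼ b) (hba : b ≼ a) : a = b := by
  induction hreach a using Relation.ReflTransGen.head_induction_on generalizing b with
  | refl => exact (eq_of_fixed_reaches hroot hab).symm
  | @head a c hac _ ih =>
    by_cases hne : a = b
    · exact hne
    have hcb : c = b := ih (hac ▸ parent_reaches_of_reaches_of_ne hab hne) (hba.tail hac)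
    have hca : c = a := ih (hcb ▸ hba) (.single hac)
    exact hca.symm.trans hcb

theorem exists_child_reaches_of_reaches {v w : V} (h : v ≼ w) (hne : v ≠ w) :
    ∃ c, parent c = w ∧ c ≠ w ∧ v ≼ c := by
  induction h with
  | refl => exact absurd rfl hne
  | @tail b w hvb hbw ih =>
    by_cases hb : b = w
    · subst hb
      exact ih hne
    · exact ⟨b, hbw, hb, hvb⟩

theorem eq_of_reaches_of_parent_eq (hroot : parent r = r) (hreach : ∀ x, x ≼ r)
    {c₁ c₂ v : V} (h₁ : parent c₁ = v) (h₂ : parent c₂ = v) (hc₂ : c₂ ≠ v) (h : c₁ ≼ c₂) :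
    c₁ = c₂ := by
  by_contra hne
  have hvc : v ≼ c₂ := h₁ ▸ parent_reaches_of_reaches_of_ne h hne
  exact hc₂ (reaches_antisymm hroot hreach (.single h₂) hvc)

theorem surv_antitone : Antitone (surv parent) :=
  antitone_nat_of_succ_le fun _ _ h => h.1

theorem mem_surv_of_reaches {k : ℕ} {x a : V} (hx : x ∈ surv parent k) (hxa : x ≼ a) :
    a ∈ surv parent k := by
  induction k with
  | zero => trivial
  | succ k ih => exact ⟨ih hx.1, fun ha => hx.2 fun y hy => ha y (hy.trans hxa)⟩

theorem exists_mem_leavesIn_reaches [Finite V] (hroot : parent r = r) (hreach : ∀ x, x ≼ r)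
    {S : Set V} {v : V} (hv : v ∈ S) : ∃ l ∈ leavesIn parent S, l ≼ v := by
  -- a descendant of `v` in `S` with a maximal set of ancestors has no child in `S`
  obtain ⟨x, ⟨hxS, hxv⟩, hmax⟩ :=
    (S ∩ desc parent v).toFinite.exists_maximalFor (anc parent) _ ⟨v, hv, .refl⟩
  refine ⟨x, ⟨hxS, Set.eq_empty_of_forall_notMem fun c ⟨hcS, hcx, hpc⟩ => hcx ?_⟩, hxv⟩
  have hcx' : c ≼ x := .single hpc
  have hxc : x ≼ c :=
    hmax ⟨hcS, hcx'.trans hxv⟩ (fun _ hy => hcx'.trans hy) (.refl : c ≼ c)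
  exact reaches_antisymm hroot hreach hcx' hxc

theorem ncard_leavesIn_univ_lt [Fintype V] (hreach : ∀ x, x ≼ r) (hn : 2 ≤ Fintype.card V) :
    (leavesIn parent Set.univ).ncard < Fintype.card V := by
  obtain ⟨v, hvr⟩ := Fintype.exists_ne_of_one_lt_card hn r
  obtain ⟨c, hpc, hcr, -⟩ := exists_child_reaches_of_reaches (hreach v) hvr
  rw [← Nat.card_eq_fintype_card]
  refine Set.ncard_lt_card fun h => ?_
  have hr : r ∈ leavesIn parent Set.univ := by
    rw [h]
    trivial
  exact (hr.2 ▸ ⟨trivial, hcr, hpc⟩ : c ∈ (∅ : Set V))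

theorem eq_of_mem_leavesIn_surv_of_reaches {k : ℕ} {v w : V}
    (hv : v ∈ leavesIn parent (surv parent k)) (hw : w ∈ leavesIn parent (surv parent k))
    (h : v ≼ w) : v = w := by
  by_contra hne
  obtain ⟨c, hpc, hcw, hvc⟩ := exists_child_reaches_of_reaches h hne
  exact (hw.2 ▸ ⟨mem_surv_of_reaches hv.1 hvc, hcw, hpc⟩ : c ∈ (∅ : Set V))

theorem nontrivial_childrenIn_of_mem_leavesIn_surv_succ {k : ℕ} {v : V}
    (hv : v ∈ leavesIn parent (surv parent (k + 1))) :
    (childrenIn parent (surv parent k) v).Nontrivial := by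
  obtain ⟨⟨hvk, hnb⟩, hleaf⟩ := hv
  simp only [inBoughIn, not_forall, Set.not_subsingleton_iff] at hnb
  obtain ⟨x, hxv, hxS, hx⟩ := hnb
  obtain rfl : x = v := by
    by_contra hne
    obtain ⟨c, hpc, hcv, hxc⟩ := exists_child_reaches_of_reaches hxv hne
    have hc : c ∈ surv parent (k + 1) :=
      ⟨mem_surv_of_reaches hxS hxc, fun hc => hx.not_subsingleton (hc x hxc hxS)⟩
    exact (hleaf ▸ ⟨hc, hcv, hpc⟩ : c ∈ (∅ : Set V))
  exact hx

theorem exists_two_leavesIn_surv_below [Finite V] (hroot : parent r = r) (hreach : ∀ x, x ≼ r)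
    {k : ℕ} {v : V} (hv : v ∈ leavesIn parent (surv parent (k + 1))) :
    ∃ l₁ ∈ leavesIn parent (surv parent k), ∃ l₂ ∈ leavesIn parent (surv parent k),
      l₁ ≠ l₂ ∧ (l₁ ≼ v) ∧ (l₂ ≼ v) := by
  obtain ⟨c₁, ⟨hc₁S, hc₁v, hpc₁⟩, c₂, ⟨hc₂S, hc₂v, hpc₂⟩, hne⟩ :=
    nontrivial_childrenIn_of_mem_leavesIn_surv_succ hv
  obtain ⟨l₁, hl₁, hl₁c⟩ := exists_mem_leavesIn_reaches hroot hreach hc₁S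
  obtain ⟨l₂, hl₂, hl₂c⟩ := exists_mem_leavesIn_reaches hroot hreach hc₂S
  refine ⟨l₁, hl₁, l₂, hl₂, ?_, hl₁c.tail hpc₁, hl₂c.tail hpc₂⟩
  rintro rfl
  rcases reaches_total hl₁c hl₂c with h | h
  · exact hne (eq_of_reaches_of_parent_eq hroot hreach hpc₁ hpc₂ hc₂v h)
  · exact hne (eq_of_reaches_of_parent_eq hroot hreach hpc₂ hpc₁ hc₁v h).symm

theorem two_mul_ncard_leavesIn_surv_succ_le [Finite V] (hroot : parent r = r)
    (hreach : ∀ x, x ≼ r) (k : ℕ) :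
    2 * (leavesIn parent (surv parent (k + 1))).ncard ≤
      (leavesIn parent (surv parent k)).ncard := by
  classical
  have := Fintype.ofFinite V
  have key := Finset.card_mul_le_card_mul (fun v l => l ≼ v) (m := 2) (n := 1)
    (s := (leavesIn parent (surv parent (k + 1))).toFinset)
    (t := (leavesIn parent (surv parent k)).toFinset) ?_ ?_
  · simpa [Set.ncard_eq_toFinset_card', mul_comm] using key
  · intro v hv
    obtain ⟨l₁, hl₁, l₂, hl₂, hne, hl₁v, hl₂v⟩ :=
      exists_two_leavesIn_surv_below hroot hreach (Set.mem_toFinset.1 hv)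
    exact Finset.one_lt_card.2 ⟨l₁, by simp [Finset.mem_bipartiteAbove, hl₁, hl₁v],
      l₂, by simp [Finset.mem_bipartiteAbove, hl₂, hl₂v], hne⟩
  · intro l _
    refine Finset.card_le_one.2 fun v hv w hw => ?_
    simp only [Finset.mem_bipartiteBelow, Set.mem_toFinset] at hv hw
    rcases reaches_total hv.2 hw.2 with h | h
    · exact eq_of_mem_leavesIn_surv_of_reaches hv.1 hw.1 h
    · exact (eq_of_mem_leavesIn_surv_of_reaches hw.1 hv.1 h).symm

theorem two_pow_mul_ncard_leavesIn_surv_le [Finite V] (hroot : parent r = r)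
    (hreach : ∀ x, x ≼ r) (k : ℕ) :
    2 ^ k * (leavesIn parent (surv parent k)).ncard ≤ (leavesIn parent Set.univ).ncard := by
  induction k with
  | zero => simp [surv]
  | succ k ih =>
    calc 2 ^ (k + 1) * (leavesIn parent (surv parent (k + 1))).ncard
        = 2 ^ k * (2 * (leavesIn parent (surv parent (k + 1))).ncard) := by ring
      _ ≤ 2 ^ k * (leavesIn parent (surv parent k)).ncard :=
        Nat.mul_le_mul_left _ (two_mul_ncard_leavesIn_surv_succ_le hroot hreach k)
      _ ≤ _ := ih

theorem surv_eq_empty_of_card_le_two_pow [Fintype V] (hroot : parent r = r)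
    (hreach : ∀ x, x ≼ r) (hn : 2 ≤ Fintype.card V) {K : ℕ}
    (hK : Fintype.card V ≤ 2 ^ K) :
    surv parent K = ∅ := by
  refine Set.eq_empty_of_forall_notMem fun v hv => ?_
  obtain ⟨l, hl, -⟩ := exists_mem_leavesIn_reaches hroot hreach hv
  have hpos : 0 < (leavesIn parent (surv parent K)).ncard := (Set.ncard_pos).2 ⟨l, hl⟩
  have : 2 ^ K < 2 ^ K := calc
    2 ^ K ≤ 2 ^ K * (leavesIn parent (surv parent K)).ncard := Nat.le_mul_of_pos_right _ hpos
    _ ≤ (leavesIn parent Set.univ).ncard := two_pow_mul_ncard_leavesIn_surv_le hroot hreach K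
    _ < Fintype.card V := ncard_leavesIn_univ_lt hreach hn
    _ ≤ 2 ^ K := hK
  exact this.false

end RootedTree

/-- The bough decomposition of a rooted tree with `n ≥ 2` vertices terminates after at
most `log₂ n` iterations, and every root-to-leaf path of the tree meets boughs of at
most `log₂ n` distinct iterations, hence intersects at most `log₂ n` of the
vertex-disjoint paths of the decomposition. -/
theorem bough_decomposition_log_iterations {V : Type*} [Fintype V]
    (parent : V → V) (r : V) (hroot : parent r = r)
    (hreach : ∀ x, Relation.ReflTransGen (fun a b => parent a = b) x r)
    (hn : 2 ≤ Fintype.card V) :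
    surv parent (Nat.clog 2 (Fintype.card V)) = ∅
      ∧ ∀ v, childrenIn parent Set.univ v = ∅ →
          Set.ncard {k : ℕ | ∃ x ∈ anc parent v, x ∈ surv parent k ∧ x ∉ surv parent (k + 1)}
            ≤ Nat.clog 2 (Fintype.card V) := by
  have hempty := surv_eq_empty_of_card_le_two_pow hroot hreach hn (Nat.le_pow_clog one_lt_two _)
  refine ⟨hempty, fun v _ => ?_⟩
  refine (Set.ncard_le_ncard ?_ (Set.finite_Iio _)).trans (Set.ncard_Iio_nat _).le
  rintro k ⟨x, -, hxk, -⟩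
  by_contra hk
  exact (hempty ▸ surv_antitone (not_lt.1 hk) hxk : x ∈ (∅ : Set V))
end

section
/- Let T be a rooted spanning tree of weighted graph G and v a leaf of T. Start with weights W(x) = value of cut x↓ for each vertex x, then for each edge e = {v, y} of G incident to v subtract 2w(e) from W(z) for every z on the path from y to the root. Then for every vertex x that is not an ancestor of v, the resulting W(x) equals the value of the cut x↓ ∪ v↓ minus the value of the cut v↓. -/
open scoped Classical

/-- Total weight of edges of `G` with one endpoint in `A` and the other in `B`. -/
noncomputable def betweenW {V : Type*} [Fintype V] (G : SimpleGraph V)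
    (w : V → V → ℝ) (A B : Set V) : ℝ :=
  ∑ u : V, ∑ v : V, if G.Adj u v ∧ u ∈ A ∧ v ∈ B then w u v else 0

/-- The value of the cut `C` in the weighted graph `(G, w)`. -/
noncomputable def cutValR {V : Type*} [Fintype V] (G : SimpleGraph V)
    (w : V → V → ℝ) (C : Set V) : ℝ :=
  betweenW G w C Cᶜ

/-!
A leaf `v` has `v↓ = {v}`, and `v ∉ x↓` when `x` is not an ancestor of `v`. Adding the single
vertex `v` to `D = x↓` keeps the edges from `D` and from `v` to the rest of the graph, and turns
the edges between `D` and `v`, which were counted once in the cut of `D` and once in the cut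
of `{v}`, into inner edges; hence `cut(D ∪ {v}) - cut {v} = cut D - 2 w(v, D)`.
-/

theorem desc_eq_singleton_of_children_eq_empty {V : Type*} {parent : V → V} {v : V}
    (hleaf : children parent v = ∅) : desc parent v = {v} := by
  ext x
  rw [Set.mem_singleton_iff]
  refine ⟨fun hx => ?_, fun hx => hx ▸ .refl⟩
  induction hx using Relation.ReflTransGen.head_induction_on with
  | refl => rfl
  | @head a c hac _ hcv =>
    by_contra hav
    exact Set.eq_empty_iff_forall_notMem.1 hleaf a ⟨hav, hcv ▸ hac⟩

section Cut

variable {V : Type*} [Fintype V] (G : SimpleGraph V) (w : V → V → ℝ)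

theorem betweenW_union_left {A A' : Set V} (h : Disjoint A A') (B : Set V) :
    betweenW G w (A ∪ A') B = betweenW G w A B + betweenW G w A' B := by
  simp only [betweenW, ← Finset.sum_add_distrib]
  refine Finset.sum_congr rfl fun u _ => Finset.sum_congr rfl fun z _ => ?_
  by_cases hA : u ∈ A
  · simp [hA, Set.disjoint_left.1 h hA]
  · simp [hA]

theorem betweenW_union_right (A : Set V) {B B' : Set V} (h : Disjoint B B') :
    betweenW G w A (B ∪ B') = betweenW G w A B + betweenW G w A B' := by
  simp only [betweenW, ← Finset.sum_add_distrib]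
  refine Finset.sum_congr rfl fun u _ => Finset.sum_congr rfl fun z _ => ?_
  by_cases hB : z ∈ B
  · simp [hB, Set.disjoint_left.1 h hB]
  · simp [hB]

variable {w}

theorem betweenW_comm (hsymm : ∀ a b, w a b = w b a) (A B : Set V) :
    betweenW G w A B = betweenW G w B A := by
  rw [betweenW, Finset.sum_comm]
  simp only [betweenW, G.adj_comm, hsymm, and_comm]

theorem betweenW_singleton_left (v : V) (B : Set V) :
    betweenW G w {v} B = ∑ y : V, if G.Adj v y ∧ y ∈ B then w v y else 0 := by
  rw [betweenW, Finset.sum_eq_single v (fun u _ hu => by simp [hu]) (by simp)]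
  simp

theorem cutValR_union_singleton_sub (hsymm : ∀ a b, w a b = w b a) {D : Set V} {v : V}
    (hv : v ∉ D) :
    cutValR G w (D ∪ {v}) - cutValR G w {v} = cutValR G w D - 2 * betweenW G w {v} D := by
  have hvD : Disjoint D {v} := Set.disjoint_singleton_right.2 hv
  set C := (D ∪ {v})ᶜ
  have hDc : Dᶜ = C ∪ {v} := by
    ext x; by_cases hx : x = v <;> by_cases hxD : x ∈ D <;> simp [C, hx, hxD, hv]
  have hvc : ({v} : Set V)ᶜ = C ∪ D := by
    ext x; by_cases hx : x = v <;> by_cases hxD : x ∈ D <;> simp [C, hx, hxD, hv]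
  have hCD : Disjoint C D := disjoint_compl_left.mono_right Set.subset_union_left
  have hCv : Disjoint C {v} := disjoint_compl_left.mono_right Set.subset_union_right
  simp only [cutValR, hDc, hvc, betweenW_union_left G w hvD,
    betweenW_union_right G w _ hCv, betweenW_union_right G w _ hCD, betweenW_comm G hsymm D {v}]
  ring

end Cut

theorem leaf_addpath_weights_general {V : Type*} [Fintype V]
    (G : SimpleGraph V) (w : V → V → ℝ) (hsymm : ∀ a b, w a b = w b a)
    (parent : V → V) (v : V) (hleaf : children parent v = ∅) :
    ∀ x, x ∉ anc parent v →
      cutValR G w (desc parent x)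
          - 2 * (∑ y : V, if G.Adj v y ∧ y ∈ desc parent x then w v y else 0)
        = cutValR G w (desc parent x ∪ desc parent v) - cutValR G w (desc parent v) := by
  intro x hx
  rw [desc_eq_singleton_of_children_eq_empty hleaf,
    cutValR_union_singleton_sub G hsymm (show v ∉ desc parent x from hx),
    betweenW_singleton_left]

/-- Let `v` be a leaf of a rooted spanning tree of `G`. Start from the weights
`W(x) = value of cut x↓` and, for each edge `{v, y}` of `G` incident to `v`, subtract
`2 w(v, y)` from `W(z)` for every `z` on the path from `y` to the root (equivalently,
`W(x)` loses `2 w(v, y)` for each neighbor `y ∈ x↓`). Then for every vertex `x` that is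
not an ancestor of `v`, `W(x)` equals the value of the cut `x↓ ∪ v↓` minus the value of
the cut `v↓`. -/
theorem leaf_addpath_weights {V : Type*} [Fintype V]
    (G : SimpleGraph V) (w : V → V → ℝ) (hsymm : ∀ a b, w a b = w b a)
    (parent : V → V) (r : V) (hroot : parent r = r)
    (hreach : ∀ x, Relation.ReflTransGen (fun a b => parent a = b) x r)
    (hspan : treeAdj parent ≤ G)
    (v : V) (hvr : v ≠ r) (hleaf : children parent v = ∅) :
    ∀ x, x ∉ anc parent v →
      cutValR G w (desc parent x)
          - 2 * (∑ y : V, if G.Adj v y ∧ y ∈ desc parent x then w v y else 0)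
        = cutValR G w (desc parent x ∪ desc parent v) - cutValR G w (desc parent v) :=
  leaf_addpath_weights_general G w hsymm parent v hleaf
end
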